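/- arXiv:2407.03184 — 2 statements merged into one kernel-verified Lean document; each statement's English description precedes it below -/
import Mathlib

section
/- Let L be an automorphism of 𝕋² and M_k(x) = kx mod 1. If E ⊂ 𝕋² is (n, ε)-separated with respect to L, then E' = M_k^{-1}(E) is (n, ε/k)-separated with respect to L, and |E'| = k² |E|. -/
open Filter Topology

/-- The 2-torus `𝕋² = ℝ/ℤ × ℝ/ℤ` with its flat metric. -/
abbrev T2 := AddCircle (1 : ℝ) × AddCircle (1 : ℝ)

/-- The toral map induced by an integer matrix `A`. -/
noncomputable def matMap (A : Matrix (Fin 2) (Fin 2) ℤ) : T2 → T2 :=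
  fun p => (A 0 0 • p.1 + A 0 1 • p.2, A 1 0 • p.1 + A 1 1 • p.2)

/-- The map `M_k(x) = k x mod 1` on the torus. -/
noncomputable def mulMap (k : ℕ) : T2 → T2 := fun p => (k • p.1, k • p.2)

/-- `E` is `(n, ε)`-separated for `T`: distinct points of `E` are `ε`-apart at some
time `j < n`. -/
def IsSeparated {X : Type*} [PseudoMetricSpace X] (T : X → X) (n : ℕ) (ε : ℝ)
    (E : Set X) : Prop :=
  ∀ x ∈ E, ∀ y ∈ E, x ≠ y → ∃ j < n, ε ≤ dist (T^[j] x) (T^[j] y)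


/-!
`M_k` is multiplication by `k` on the group `𝕋²`: it commutes with every toral endomorphism
`L` and is `k`-Lipschitz. Two distinct points of `M_k⁻¹(E)` with distinct images are separated
at some time because their images are `ε`-separated and `M_k` stretches distances by at most `k`.
Two distinct points with the same image differ by a nonzero `k`-torsion point, whose coordinates
lie in `(1/k)ℤ/ℤ`, so they are `1/k ≥ ε/k` apart already at time `0`. Finally `M_k` is a surjective
homomorphism with kernel `(ℤ/k)²`, so each of its fibres has `k²` points.
-/

theorem lipschitzWith_nsmul {E : Type*} [SeminormedAddCommGroup E] (k : ℕ) :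
    LipschitzWith k (fun x : E => k • x) :=
  LipschitzWith.of_dist_le_mul fun x y => by
    simpa only [dist_eq_norm, ← smul_sub, NNReal.coe_natCast] using norm_nsmul_le

theorem AddMonoidHom.card_preimage_of_surjective {G H : Type*} [AddGroup G] [AddGroup H]
    (f : G →+ H) (hf : Function.Surjective f) (E : Set H) :
    Nat.card (f ⁻¹' E) = Nat.card f.ker * Nat.card E := by
  let φ := QuotientAddGroup.quotientKerEquivOfSurjective f hf
  have hpre : f ⁻¹' E = QuotientAddGroup.mk ⁻¹' (φ ⁻¹' E) := rfl
  rw [hpre, Nat.card_congr (QuotientAddGroup.preimageMkEquivAddSubgroupProdSet _ _),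
    Nat.card_prod, Nat.card_preimage_of_injective φ.injective (by simp [φ.surjective.range_eq])]

theorem IsSeparated.preimage {X Y : Type*} [PseudoMetricSpace X] [PseudoMetricSpace Y]
    {T : X → X} {S : Y → Y} {f : X → Y} {K : NNReal} {n : ℕ} {ε : ℝ} {E : Set Y}
    (hE : IsSeparated S n ε E) (hf : LipschitzWith K f) (hfT : Function.Semiconj f T S)
    (hn : 0 < n) (hfib : ∀ x y, x ≠ y → f x = f y → ε / K ≤ dist x y) :
    IsSeparated T n (ε / K) (f ⁻¹' E) := by
  intro x hx y hy hxy
  by_cases hfxy : f x = f y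
  · exact ⟨0, hn, hfib x y hxy hfxy⟩
  obtain ⟨j, hj, hdist⟩ := hE _ hx _ hy hfxy
  refine ⟨j, hj, div_le_of_le_mul₀ K.coe_nonneg dist_nonneg ?_⟩
  calc ε ≤ dist (S^[j] (f x)) (S^[j] (f y)) := hdist
    _ = dist (f (T^[j] x)) (f (T^[j] y)) := by
      rw [(hfT.iterate_right j).eq, (hfT.iterate_right j).eq]
    _ ≤ K * dist (T^[j] x) (T^[j] y) := hf.dist_le_mul _ _
    _ = _ := mul_comm _ _

theorem AddCircle.div_le_norm_of_nsmul_eq_zero {p : ℝ} [Fact (0 < p)] {k : ℕ}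
    {u : AddCircle p} (hu : u ≠ 0) (hku : k • u = 0) : p / k ≤ ‖u‖ := by
  rcases Nat.eq_zero_or_pos k with rfl | hk
  · simp
  have hfin : IsOfFinAddOrder u := isOfFinAddOrder_iff_nsmul_eq_zero.mpr ⟨k, hk, hku⟩
  have hord : (addOrderOf u : ℝ) ≤ k := by
    exact_mod_cast Nat.le_of_dvd hk (addOrderOf_dvd_of_nsmul_eq_zero hku)
  rw [div_le_iff₀ (by positivity)]
  calc p ≤ addOrderOf u • ‖u‖ := le_add_order_smul_norm_of_isOfFinAddOrder hfin hu
    _ = addOrderOf u * ‖u‖ := nsmul_eq_mul _ _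
    _ ≤ ‖u‖ * k := by rw [mul_comm]; gcongr

theorem UnitAddCircle.card_nsmul_eq_zero (k : ℕ) [NeZero k] :
    Nat.card {u : UnitAddCircle // k • u = 0} = k := by
  have hrange : {u : UnitAddCircle | k • u = 0} = Set.range (ZMod.toAddCircle (N := k)) := by
    ext u
    constructor
    · intro hu
      obtain ⟨m, -, rfl⟩ := (AddCircle.nsmul_eq_zero_iff (NeZero.pos k)).mp hu
      exact ⟨m, by rw [ZMod.toAddCircle_natCast, mul_one]⟩
    · rintro ⟨j, rfl⟩
      rw [Set.mem_ofPred_eq, ← map_nsmul, nsmul_eq_mul, ZMod.natCast_self, zero_mul, map_zero]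
  rw [← Set.coe_ofPred, hrange, Nat.card_range_of_injective (ZMod.toAddCircle_injective k),
    Nat.card_zmod]

theorem T2.card_ker_nsmulAddMonoidHom (k : ℕ) [NeZero k] :
    Nat.card (nsmulAddMonoidHom (α := T2) k).ker = k ^ 2 := by
  have e : (nsmulAddMonoidHom (α := T2) k).ker ≃
      {u : UnitAddCircle // k • u = 0} × {u : UnitAddCircle // k • u = 0} :=
    (Equiv.subtypeEquivRight fun p => by simp [Prod.ext_iff]).trans Equiv.subtypeProdEquivProd
  rw [Nat.card_congr e, Nat.card_prod, UnitAddCircle.card_nsmul_eq_zero, sq]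

theorem mulMap_eq_nsmulAddMonoidHom (k : ℕ) : mulMap k = nsmulAddMonoidHom k := rfl

theorem surjective_mulMap {k : ℕ} (hk : k ≠ 0) : Function.Surjective (mulMap k) :=
  letI := AddGroup.divisibleByNatOfDivisibleByInt T2
  DivisibleBy.surjective_smul T2 ℕ hk

theorem commute_mulMap_matMap (k : ℕ) (A : Matrix (Fin 2) (Fin 2) ℤ) :
    Function.Commute (mulMap k) (matMap A) := fun p => by
  simp only [mulMap, matMap, smul_add, smul_comm k]

theorem one_div_le_dist_of_mulMap_eq {k : ℕ} {x y : T2} (hxy : x ≠ y)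
    (hk : mulMap k x = mulMap k y) : 1 / k ≤ dist x y := by
  have hv : x - y ≠ 0 := sub_ne_zero.mpr hxy
  have hkv : k • (x - y) = 0 := by rw [smul_sub, sub_eq_zero]; exact hk
  rw [dist_eq_norm]
  generalize x - y = v at hv hkv
  obtain ⟨a, b⟩ := v
  rw [Prod.smul_mk, Prod.mk_eq_zero] at hkv
  rw [Prod.norm_mk]
  by_cases ha : a = 0
  · have hb : b ≠ 0 := fun hb => hv (by rw [ha, hb, Prod.mk_zero_zero])
    exact (AddCircle.div_le_norm_of_nsmul_eq_zero hb hkv.2).trans (le_max_right _ _)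
  · exact (AddCircle.div_le_norm_of_nsmul_eq_zero ha hkv.1).trans (le_max_left _ _)

theorem stmt5_general (A : Matrix (Fin 2) (Fin 2) ℤ)
    (k : ℕ) (hk : 1 ≤ k) (n : ℕ) (hn : 1 ≤ n) (ε : ℝ) (hε : ε ≤ 1)
    (E : Set T2) (hE : IsSeparated (matMap A) n ε E) :
    IsSeparated (matMap A) n (ε / k) (mulMap k ⁻¹' E) ∧
    Nat.card (mulMap k ⁻¹' E) = k ^ 2 * Nat.card E := by
  have : NeZero k := ⟨Nat.one_le_iff_ne_zero.mp hk⟩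
  constructor
  · have hfib (x y : T2) (hxy : x ≠ y) (hkxy : mulMap k x = mulMap k y) :
        ε / (k : NNReal) ≤ dist x y := by
      rw [NNReal.coe_natCast]
      exact (div_le_div_of_nonneg_right hε k.cast_nonneg).trans
        (one_div_le_dist_of_mulMap_eq hxy hkxy)
    simpa only [NNReal.coe_natCast] using
      hE.preimage (f := mulMap k) (lipschitzWith_nsmul k) (commute_mulMap_matMap k A) hn hfib
  · rw [mulMap_eq_nsmulAddMonoidHom, AddMonoidHom.card_preimage_of_surjective _
      (surjective_mulMap (NeZero.ne k)), T2.card_ker_nsmulAddMonoidHom]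

/-- if `E` is `(n, ε)`-separated for the toral automorphism `L`, then
`E' = M_k⁻¹(E)` is `(n, ε/k)`-separated, and `|E'| = k² |E|`. -/
theorem stmt5 (A : Matrix (Fin 2) (Fin 2) ℤ) (hdet : A.det = 1 ∨ A.det = -1)
    (k : ℕ) (hk : 1 ≤ k) (n : ℕ) (hn : 1 ≤ n) (ε : ℝ) (hε : ε ≤ 1)
    (E : Set T2) (hE : IsSeparated (matMap A) n ε E) :
    IsSeparated (matMap A) n (ε / k) (mulMap k ⁻¹' E) ∧
    Nat.card (mulMap k ⁻¹' E) = k ^ 2 * Nat.card E :=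
  stmt5_general A k hk n hn ε hε E hE
end

section
/- Let Ω be a mixing subshift of finite type with shift σ, and let ψ : Ω → ℝ be Hölder continuous. Suppose there exists M > 0 and a symbol 0 such that |S_{n+1} ψ(ω)| ≤ M whenever ω ∈ [0] and σⁿ ω ∈ [0] (where [0] is the cylinder of points with ω₀ = 0 and S_m ψ denotes the Birkhoff sum). Then S_n ψ(p) is uniformly bounded over all periodic points p with σⁿ p = p and all n; in particular, for every periodic point p of period n, |S_n ψ(p)| ≤ M + C for a constant C depending only on ψ and the mixing constant of Ω. -/
open Filter Topology
open scoped Classical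

/-- The standard metric on a two-sided shift space: `d(ω, ω') = 2^{−n}` where
`n = min { |j| : ω_j ≠ ω'_j }`, and `0` if `ω = ω'`. -/
noncomputable def shiftDist {A : Type*} (ω ω' : ℤ → A) : ℝ :=
  if ω = ω' then 0
  else (2 : ℝ) ^ (-((sInf {n : ℕ | ∃ j : ℤ, j.natAbs = n ∧ ω j ≠ ω' j} : ℕ) : ℤ))

def shiftMap {A : Type*} (ω : ℤ → A) : ℤ → A := fun j => ω (j + 1)

def SFT {A : Type*} (Trans : A → A → Prop) : Set (ℤ → A) :=
  {ω : ℤ → A | ∀ j : ℤ, Trans (ω j) (ω (j + 1))}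

open Finset Set

/-!
Splice the orbit word `p₀ ⋯ pₙ` between two connecting words of length `N`
(from `a₀` to `p₀` and from `pₙ` to `a₀`, provided by mixing) and close the result up into a
periodic point `q` with `q₀ = q_L = a₀`, `L = n + 2N`. The hypothesis bounds `S_{L+1} ψ(q)` by `M`;
the two connecting pieces contribute at most `(2N + 1) sup |ψ|`, and since `σʲ p` and `σ^{N+j} q`
agree on all coordinates `|l| ≤ min(j, n - 1 - j)`, Hölder continuity makes `S_n ψ(σ^N q)` differ
from `S_n ψ(p)` by at most a geometric series.
-/

section Words

variable {A : Type*} (Trans : A → A → Prop)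

def IsAdmissibleWord (u : ℕ → A) (m : ℕ) : Prop :=
  ∀ i < m, Trans (u i) (u (i + 1))

variable {Trans}

def appendWord (u : ℕ → A) (m : ℕ) (v : ℕ → A) : ℕ → A :=
  fun i => if i ≤ m then u i else v (i - m)

theorem appendWord_of_le {u v : ℕ → A} {m i : ℕ} (hi : i ≤ m) : appendWord u m v i = u i :=
  if_pos hi

theorem appendWord_of_ge {u v : ℕ → A} {m i : ℕ} (h : u m = v 0) (hi : m ≤ i) :
    appendWord u m v i = v (i - m) := by
  rcases hi.eq_or_lt with rfl | hi
  · simp [appendWord, h]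
  · exact if_neg hi.not_ge

theorem IsAdmissibleWord.append {u v : ℕ → A} {m k : ℕ} (hu : IsAdmissibleWord Trans u m)
    (hv : IsAdmissibleWord Trans v k) (h : u m = v 0) :
    IsAdmissibleWord Trans (appendWord u m v) (m + k) := by
  intro i hi
  rcases lt_or_ge i m with him | him
  · rw [appendWord_of_le him.le, appendWord_of_le him]
    exact hu i him
  · rw [appendWord_of_ge h him, appendWord_of_ge h (by omega), Nat.sub_add_comm him]
    exact hv (i - m) (by omega)

theorem isAdmissibleWord_of_mem_SFT {ω : ℤ → A} (hω : ω ∈ SFT Trans) (m : ℕ) :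
    IsAdmissibleWord Trans (fun i : ℕ => ω i) m := fun i _ => by
  simpa using hω i

end Words

section Splice

variable {A : Type*} {Trans : A → A → Prop}

def periodize (u : ℕ → A) (L : ℕ) : ℤ → A := fun j => u (j % L).toNat

theorem periodize_natCast (u : ℕ → A) (L i : ℕ) : periodize u L i = u (i % L) := by
  simp only [periodize, ← Int.natCast_mod, Int.toNat_natCast]

theorem periodize_mem_SFT {u : ℕ → A} {L : ℕ} (hL : 0 < L) (hu : IsAdmissibleWord Trans u L)
    (hper : u L = u 0) : periodize u L ∈ SFT Trans := by
  intro j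
  have hLZ : (0 : ℤ) < L := by exact_mod_cast hL
  obtain ⟨r, hr⟩ : ∃ r : ℕ, (r : ℤ) = j % L :=
    ⟨(j % L).toNat, Int.toNat_of_nonneg (Int.emod_nonneg j hLZ.ne')⟩
  have hrL : r < L := by have := Int.emod_lt_of_pos j hLZ; omega
  have hsucc : (j + 1) % L = ((r + 1 : ℕ) : ℤ) % L := by
    push_cast
    rw [hr, Int.emod_add_emod]
  simp only [periodize, hsucc, ← hr, ← Int.natCast_mod, Int.toNat_natCast]
  rcases (show r + 1 ≤ L from hrL).lt_or_eq with hlt | heq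
  · rw [Nat.mod_eq_of_lt hlt]
    exact hu r hrL
  · rw [heq, Nat.mod_self, ← hper, ← heq]
    exact hu r hrL

theorem exists_mem_SFT_splice {v w₁ w₂ : ℕ → A} {n N₁ N₂ : ℕ} (hn : 0 < n)
    (hv : IsAdmissibleWord Trans v n) (hw₁ : IsAdmissibleWord Trans w₁ N₁)
    (hw₂ : IsAdmissibleWord Trans w₂ N₂) (h₁ : w₁ N₁ = v 0) (h₂ : v n = w₂ 0)
    (h₀ : w₂ N₂ = w₁ 0) :
    ∃ q ∈ SFT Trans, q 0 = w₁ 0 ∧ q (N₁ + (n + N₂) : ℕ) = w₁ 0 ∧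
      ∀ i < n, q (N₁ + i : ℕ) = v i := by
  set u := appendWord w₁ N₁ (appendWord v n w₂) with hu
  have hjoin : w₁ N₁ = appendWord v n w₂ 0 := by rw [appendWord_of_le n.zero_le, h₁]
  have huL : u (N₁ + (n + N₂)) = w₁ 0 := by
    rw [hu, appendWord_of_ge hjoin (by omega), Nat.add_sub_cancel_left,
      appendWord_of_ge h₂ (by omega), Nat.add_sub_cancel_left, h₀]
  have hu0 : u 0 = w₁ 0 := appendWord_of_le N₁.zero_le
  refine ⟨periodize u (N₁ + (n + N₂)), periodize_mem_SFT (by omega)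
    (hw₁.append (hv.append hw₂ h₂) hjoin) (huL.trans hu0.symm), ?_, ?_, fun i hi => ?_⟩
  · simpa using periodize_natCast u (N₁ + (n + N₂)) 0 |>.trans hu0
  · rw [periodize_natCast, Nat.mod_self, hu0]
  · rw [periodize_natCast, Nat.mod_eq_of_lt (by omega), hu, appendWord_of_ge hjoin (by omega),
      Nat.add_sub_cancel_left, appendWord_of_le hi.le]

end Splice

section Shift

variable {A : Type*} {Trans : A → A → Prop}

theorem shiftMap_iterate_apply (ω : ℤ → A) (i : ℕ) (j : ℤ) :
    (shiftMap^[i] ω) j = ω (j + i) := by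
  induction i generalizing j with
  | zero => simp
  | succ k ih =>
    rw [Function.iterate_succ_apply', shiftMap, ih]
    push_cast
    ring_nf

theorem mapsTo_shiftMap_SFT : MapsTo shiftMap (SFT Trans) (SFT Trans) :=
  fun _ hω j => hω (j + 1)

theorem shiftDist_nonneg (ω ω' : ℤ → A) : 0 ≤ shiftDist ω ω' := by
  unfold shiftDist
  split_ifs <;> positivity

theorem shiftDist_le_one (ω ω' : ℤ → A) : shiftDist ω ω' ≤ 1 := by
  unfold shiftDist
  split_ifs
  · exact zero_le_one
  · exact zpow_le_one_of_nonpos₀ one_le_two (by simp)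

theorem shiftDist_le_of_eqOn {ω ω' : ℤ → A} {k : ℕ}
    (h : ∀ l : ℤ, l.natAbs ≤ k → ω l = ω' l) :
    shiftDist ω ω' ≤ (2 : ℝ) ^ (-(k : ℤ)) := by
  unfold shiftDist
  split_ifs with hne
  · positivity
  · apply zpow_le_zpow_right₀ one_le_two
    rw [neg_le_neg_iff, Int.ofNat_le]
    obtain ⟨j, hj⟩ : ∃ j, ω j ≠ ω' j := by simpa [funext_iff] using hne
    apply le_csInf
    · exact ⟨j.natAbs, j, rfl, hj⟩
    rintro m ⟨j, rfl, hj⟩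
    by_contra hlt
    exact hj (h j (by omega))

theorem shiftDist_iterate_le_of_eqOn {x y : ℤ → A} {n j : ℕ}
    (hxy : ∀ i < n, x i = y i) (hj : j < n) :
    shiftDist (shiftMap^[j] x) (shiftMap^[j] y) ≤ (2 : ℝ) ^ (-(min j (n - 1 - j) : ℕ) : ℤ) := by
  refine shiftDist_le_of_eqOn fun l hl => ?_
  obtain ⟨i, hi⟩ : ∃ i : ℕ, (i : ℤ) = l + j := ⟨(l + j).toNat, by omega⟩
  rw [shiftMap_iterate_apply, shiftMap_iterate_apply, ← hi]
  exact hxy i (by omega)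

end Shift

theorem abs_birkhoffSum_le {α : Type*} {f : α → α} {g : α → ℝ} {s : Set α} (hf : MapsTo f s s)
    {B : ℝ} (hg : ∀ x ∈ s, |g x| ≤ B) {x : α} (hx : x ∈ s) (n : ℕ) :
    |birkhoffSum f g n x| ≤ n * B :=
  calc |birkhoffSum f g n x| ≤ ∑ k ∈ range n, |g (f^[k] x)| := abs_sum_le_sum_abs _ _
    _ ≤ ∑ _k ∈ range n, B := sum_le_sum fun k _ => hg (f^[k] x) (hf.iterate k hx)
    _ = n * B := by rw [sum_const, card_range, nsmul_eq_mul]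

theorem sum_pow_min_le {r : ℝ} (hr0 : 0 ≤ r) (hr1 : r < 1) (n : ℕ) :
    ∑ j ∈ range n, r ^ min j (n - 1 - j) ≤ 2 / (1 - r) := by
  have hgeom : ∑ j ∈ range n, r ^ j ≤ 1 / (1 - r) := by
    have := geom_sum_Ico_le_of_lt_one (m := 0) (n := n) hr0 hr1
    rwa [pow_zero, ← range_eq_Ico] at this
  have hterm : ∀ j ∈ range n, r ^ min j (n - 1 - j) ≤ r ^ j + r ^ (n - 1 - j) := by
    intro j _
    rcases min_choice j (n - 1 - j) with h | h <;> rw [h]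
    · exact le_add_of_nonneg_right (pow_nonneg hr0 _)
    · exact le_add_of_nonneg_left (pow_nonneg hr0 _)
  calc ∑ j ∈ range n, r ^ min j (n - 1 - j)
      ≤ ∑ j ∈ range n, (r ^ j + r ^ (n - 1 - j)) := sum_le_sum hterm
    _ = 2 * ∑ j ∈ range n, r ^ j := by
      rw [sum_add_distrib, sum_range_reflect (r ^ ·) n, two_mul]
    _ ≤ 2 / (1 - r) := by
      rw [div_eq_mul_one_div]
      exact mul_le_mul_of_nonneg_left hgeom zero_le_two

section Holder

variable {A : Type*} {Trans : A → A → Prop} {ψ : (ℤ → A) → ℝ} {Cψ α : ℝ}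

theorem abs_le_abs_add_of_holder (hCψ : 0 ≤ Cψ) (hα : 0 < α)
    (hψ : ∀ ω ∈ SFT Trans, ∀ ω' ∈ SFT Trans, |ψ ω - ψ ω'| ≤ Cψ * shiftDist ω ω' ^ α)
    {ω₀ x : ℤ → A} (hω₀ : ω₀ ∈ SFT Trans) (hx : x ∈ SFT Trans) : |ψ x| ≤ |ψ ω₀| + Cψ := by
  have hdist : shiftDist x ω₀ ^ α ≤ 1 :=
    Real.rpow_le_one (shiftDist_nonneg _ _) (shiftDist_le_one _ _) hα.le
  have hdiff : |ψ x - ψ ω₀| ≤ Cψ :=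
    (hψ x hx ω₀ hω₀).trans (mul_le_of_le_one_right hCψ hdist)
  have := abs_sub_abs_le_abs_sub (ψ x) (ψ ω₀)
  linarith

theorem abs_birkhoffSum_sub_le_of_eqOn (hCψ : 0 ≤ Cψ) (hα : 0 < α)
    (hψ : ∀ ω ∈ SFT Trans, ∀ ω' ∈ SFT Trans, |ψ ω - ψ ω'| ≤ Cψ * shiftDist ω ω' ^ α)
    {x y : ℤ → A} (hx : x ∈ SFT Trans) (hy : y ∈ SFT Trans) {n : ℕ}
    (hxy : ∀ i < n, x i = y i) :
    |birkhoffSum shiftMap ψ n x - birkhoffSum shiftMap ψ n y| ≤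
      Cψ * (2 / (1 - (2 : ℝ) ^ (-α))) := by
  set r : ℝ := (2 : ℝ) ^ (-α)
  have hr1 : r < 1 := Real.rpow_lt_one_of_one_lt_of_neg one_lt_two (neg_neg_of_pos hα)
  have hterm : ∀ j ∈ range n, |ψ (shiftMap^[j] x) - ψ (shiftMap^[j] y)| ≤
      Cψ * r ^ min j (n - 1 - j) := by
    intro j hj
    have hdist := shiftDist_iterate_le_of_eqOn hxy (mem_range.mp hj)
    calc |ψ (shiftMap^[j] x) - ψ (shiftMap^[j] y)|
        ≤ Cψ * shiftDist (shiftMap^[j] x) (shiftMap^[j] y) ^ α :=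
          hψ _ (mapsTo_shiftMap_SFT.iterate j hx) _ (mapsTo_shiftMap_SFT.iterate j hy)
      _ ≤ Cψ * ((2 : ℝ) ^ (-(min j (n - 1 - j) : ℕ) : ℤ)) ^ α := by
          gcongr
          exact shiftDist_nonneg _ _
      _ = Cψ * r ^ min j (n - 1 - j) := by
          rw [← Real.rpow_intCast, ← Real.rpow_natCast r, ← Real.rpow_mul zero_le_two,
            ← Real.rpow_mul zero_le_two]
          push_cast
          ring_nf
  calc |birkhoffSum shiftMap ψ n x - birkhoffSum shiftMap ψ n y|
      = |∑ j ∈ range n, (ψ (shiftMap^[j] x) - ψ (shiftMap^[j] y))| := by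
        rw [birkhoffSum, birkhoffSum, sum_sub_distrib]
    _ ≤ ∑ j ∈ range n, Cψ * r ^ min j (n - 1 - j) :=
        (abs_sum_le_sum_abs _ _).trans (sum_le_sum hterm)
    _ ≤ Cψ * (2 / (1 - r)) := by
        rw [← mul_sum]
        exact mul_le_mul_of_nonneg_left (sum_pow_min_le (by positivity) hr1 n) hCψ

end Holder

theorem stmt14_general {A : Type*} (Trans : A → A → Prop) (N : ℕ)
    (hmix : ∀ a b : A, ∃ w : ℕ → A, w 0 = a ∧ w N = b ∧ ∀ i < N, Trans (w i) (w (i + 1)))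
    (ψ : (ℤ → A) → ℝ) (Cψ α : ℝ) (hCψ : 0 ≤ Cψ) (hα : 0 < α)
    (hψ : ∀ ω ∈ SFT Trans, ∀ ω' ∈ SFT Trans, |ψ ω - ψ ω'| ≤ Cψ * shiftDist ω ω' ^ α)
    (a₀ : A) (M : ℝ)
    (hM : ∀ ω ∈ SFT Trans, ∀ n : ℕ, ω 0 = a₀ → (shiftMap^[n] ω) 0 = a₀ →
      |∑ i ∈ Finset.range (n + 1), ψ (shiftMap^[i] ω)| ≤ M) :
    ∃ C ≥ 0, ∀ p ∈ SFT Trans, ∀ n : ℕ, 1 ≤ n → shiftMap^[n] p = p →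
      |∑ i ∈ Finset.range n, ψ (shiftMap^[i] p)| ≤ M + C := by
  rcases (SFT Trans).eq_empty_or_nonempty with hempty | ⟨ω₀, hω₀⟩
  · exact ⟨0, le_rfl, by simp [hempty]⟩
  set B := |ψ ω₀| + Cψ
  set K := Cψ * (2 / (1 - (2 : ℝ) ^ (-α)))
  have hK : 0 ≤ K := mul_nonneg hCψ (div_nonneg zero_le_two (sub_nonneg.mpr
    (Real.rpow_le_one_of_one_le_of_nonpos one_le_two (neg_nonpos.mpr hα.le))))
  have hB : ∀ x ∈ SFT Trans, |ψ x| ≤ B := fun x hx => abs_le_abs_add_of_holder hCψ hα hψ hω₀ hx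
  refine ⟨K + (N + (N + 1)) * B, by positivity, fun p hp n hn _ => ?_⟩
  obtain ⟨w₁, hw₁0, hw₁N, hw₁⟩ := hmix a₀ (p 0)
  obtain ⟨w₂, hw₂0, hw₂N, hw₂⟩ := hmix (p n) a₀
  obtain ⟨q, hq, hq0, hqL, hqp⟩ := exists_mem_SFT_splice hn (isAdmissibleWord_of_mem_SFT hp n)
    hw₁ hw₂ hw₁N hw₂0.symm (hw₂N.trans hw₁0.symm)
  have hret := hM q hq (N + (n + N)) (hq0.trans hw₁0)
    (by rw [shiftMap_iterate_apply, zero_add, hqL, hw₁0])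
  have hsplit : birkhoffSum shiftMap ψ (N + (n + N) + 1) q = birkhoffSum shiftMap ψ N q +
      birkhoffSum shiftMap ψ n (shiftMap^[N] q) +
      birkhoffSum shiftMap ψ (N + 1) (shiftMap^[n] (shiftMap^[N] q)) := by
    rw [add_assoc, add_assoc, birkhoffSum_add, birkhoffSum_add, add_assoc]
  have hshadow := abs_birkhoffSum_sub_le_of_eqOn hCψ hα hψ hp
    (mapsTo_shiftMap_SFT.iterate N hq) (n := n) fun i hi => by
      rw [shiftMap_iterate_apply, add_comm, ← Nat.cast_add, hqp i hi]
  have hhead := abs_birkhoffSum_le mapsTo_shiftMap_SFT hB hq N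
  have htail := abs_birkhoffSum_le mapsTo_shiftMap_SFT hB
    (mapsTo_shiftMap_SFT.iterate n (mapsTo_shiftMap_SFT.iterate N hq)) (N + 1)
  change |birkhoffSum shiftMap ψ n p| ≤ _
  change |birkhoffSum shiftMap ψ (N + (n + N) + 1) q| ≤ M at hret
  push_cast at htail
  rw [hsplit] at hret
  rw [abs_le] at hret hshadow hhead htail ⊢
  constructor <;> linarith

/-- on a mixing SFT, if the Hölder function `ψ` has Birkhoff sums over
returns to the cylinder `[a₀]` bounded by `M` (`|S_{n+1} ψ(ω)| ≤ M` whenever `ω ∈ [a₀]`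
and `σⁿ ω ∈ [a₀]`), then the Birkhoff sums over all periodic orbits are uniformly
bounded: there is `C ≥ 0`, depending only on `ψ` and the mixing constant, with
`|S_n ψ(p)| ≤ M + C` for every periodic point `p` of period `n`. -/
theorem stmt14 {A : Type*} [Fintype A] (Trans : A → A → Prop) (N : ℕ) (hN : 0 < N)
    (hmix : ∀ a b : A, ∃ w : ℕ → A, w 0 = a ∧ w N = b ∧ ∀ i < N, Trans (w i) (w (i + 1)))
    (ψ : (ℤ → A) → ℝ) (Cψ α : ℝ) (hCψ : 0 ≤ Cψ) (hα : 0 < α)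
    (hψ : ∀ ω ∈ SFT Trans, ∀ ω' ∈ SFT Trans, |ψ ω - ψ ω'| ≤ Cψ * shiftDist ω ω' ^ α)
    (a₀ : A) (M : ℝ)
    (hM : ∀ ω ∈ SFT Trans, ∀ n : ℕ, ω 0 = a₀ → (shiftMap^[n] ω) 0 = a₀ →
      |∑ i ∈ Finset.range (n + 1), ψ (shiftMap^[i] ω)| ≤ M) :
    ∃ C ≥ 0, ∀ p ∈ SFT Trans, ∀ n : ℕ, 1 ≤ n → shiftMap^[n] p = p →
      |∑ i ∈ Finset.range n, ψ (shiftMap^[i] p)| ≤ M + C :=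
  stmt14_general Trans N hmix ψ Cψ α hCψ hα hψ a₀ M hM
end
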